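/- arXiv:2509.05872 — 13 statements merged into one kernel-verified Lean document; each statement's English description precedes it below -/
import Mathlib

section
/- Let L be a Morgado hyperlattice and A, B ⊆ L stable nonempty sets. Then for # ∈ {⋏, ⋎}, the set A # B := {u : u ∈ a # b for some a ∈ A, b ∈ B} is stable, and moreover A # B = a # b for every a ∈ A and b ∈ B. -/
namespace HyperSwap

variable {L : Type*}

/-- `A ⪯ B` pointwise for subsets w.r.t. a relation `r`. -/
def setLe (r : L → L → Prop) (A B : Set L) : Prop := ∀ a ∈ A, ∀ b ∈ B, r a b

/-- `A ≡ B`: mutual pointwise `⪯`. -/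
def setEquiv (r : L → L → Prop) (A B : Set L) : Prop := setLe r A B ∧ setLe r B A

def Ub (r : L → L → Prop) (B : Set L) : Set L := {z | ∀ b ∈ B, r b z}
def Lb (r : L → L → Prop) (B : Set L) : Set L := {z | ∀ b ∈ B, r z b}
def minS (r : L → L → Prop) (B : Set L) : Set L := {x | x ∈ B ∧ ∀ b ∈ B, r x b}
def maxS (r : L → L → Prop) (B : Set L) : Set L := {x | x ∈ B ∧ ∀ b ∈ B, r b x}

/-- Morgado hypersupremum (supremoid). -/
def supm (r : L → L → Prop) (x y : L) : Set L := minS r (Ub r {x, y})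

/-- Morgado hyperinfimum (infimoid). -/
def infm (r : L → L → Prop) (x y : L) : Set L := maxS r (Lb r {x, y})

/-- `⊤ = Max(L)`. -/
def topSet (r : L → L → Prop) : Set L := maxS r Set.univ

/-- A set is stable if all its elements are pairwise similar. -/
def stable (r : L → L → Prop) (A : Set L) : Prop := ∀ a ∈ A, ∀ b ∈ A, r a b

/-- `R(x,y) = {z : x ⋏ z ⪯ y}`. -/
def Rset (r : L → L → Prop) (x y : L) : Set L := {z | setLe r (infm r x z) {y}}

/-- A preordered set. -/
structure Proset (L : Type*) where
  le : L → L → Prop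
  refl : ∀ x, le x x
  trans : ∀ x y z, le x y → le y z → le x z

/-- A Morgado hyperlattice: a proset with nonempty infimoids and supremoids. -/
structure Morgado (L : Type*) extends Proset L where
  inf_ne : ∀ x y, (infm le x y).Nonempty
  sup_ne : ∀ x y, (supm le x y).Nonempty

/-- A Sette implicative hyperlattice, via the characterization `x ⊸ y = Max(R(x,y))`. -/
structure IHL (L : Type*) extends Morgado L where
  imp : L → L → Set L
  imp_ne : ∀ x y, (imp x y).Nonempty
  imp_eq : ∀ x y, imp x y = maxS le (Rset le x y)

/-- A hyper `C_ω` algebra: an IHL with `÷` satisfying (H1') and (H2'). -/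
structure HCA (L : Type*) extends IHL L where
  dv : L → Set L
  dv_ne : ∀ x, (dv x).Nonempty
  H1 : ∀ x, setEquiv le (⋃ y ∈ dv x, supm le x y) (topSet le)
  H2 : ∀ x, setLe le (⋃ y ∈ dv x, dv y) {x}

/-- `x ∼ y` iff `x, y ∈ ÷z` for some `z`. -/
def simRel {α : Type*} (dv : α → Set α) (x y : α) : Prop := ∃ z, x ∈ dv z ∧ y ∈ dv z

/-- An enriched hyper `C_ω` algebra: a hyper `C_ω` algebra satisfying E0–E4. -/
structure EHCA (L : Type*) extends HCA L where
  E0 : ∀ x, x ∈ ⋃ y ∈ dv x, dv y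
  E1 : ∀ x, stable le (dv x)
  E2 : ∀ x y z, simRel dv x y → simRel dv y z → simRel dv x z
  E3 : ∀ x y, setEquiv le (supm le x y) (topSet le) →
        ∃ z, simRel dv x z ∧ ∀ w ∈ dv z, simRel dv y w
  E4 : ∀ x y, simRel dv x y → (∀ a ∈ dv x, ∀ b ∈ dv y, simRel dv a b) → x = y

/-- Domain of the hyper swap structure: `{z ∈ L × L : z₁ ⋎ z₂ ≡ ⊤}`. -/
def SDom (H : IHL L) : Set (L × L) :=
  {z | setEquiv H.le (supm H.le z.1 z.2) (topSet H.le)}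

/-- Preorder on snapshots via first coordinates. -/
def swapLe (H : IHL L) (z w : SDom H) : Prop := H.le z.1.1 w.1.1

def swapInf (H : IHL L) (z w : SDom H) : Set (SDom H) :=
  {u | u.1.1 ∈ infm H.le z.1.1 w.1.1}

def swapSup (H : IHL L) (z w : SDom H) : Set (SDom H) :=
  {u | u.1.1 ∈ supm H.le z.1.1 w.1.1}

def swapImp (H : IHL L) (z w : SDom H) : Set (SDom H) :=
  {u | u.1.1 ∈ H.imp z.1.1 w.1.1}

/-- `÷z = {u ∈ S : u₁ = z₂ and u₂ ⪯ z₁}`. -/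
def swapDiv (H : IHL L) (z : SDom H) : Set (SDom H) :=
  {u | u.1.1 = z.1.2 ∧ H.le u.1.2 z.1.1}

lemma infm_congr (M : Proset L) {a a' b b' : L} (ha : M.le a a') (ha' : M.le a' a)
    (hb : M.le b b') (hb' : M.le b' b) : infm M.le a b = infm M.le a' b' := by
  have hLb : Lb M.le {a, b} = Lb M.le {a', b'} := by
    ext z
    simp only [Lb, Set.mem_setOf_eq, Set.mem_insert_iff, Set.mem_singleton_iff]
    constructor
    · rintro h c (rfl | rfl)
      · exact M.trans _ _ _ (h a (Or.inl rfl)) ha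
      · exact M.trans _ _ _ (h b (Or.inr rfl)) hb
    · rintro h c (rfl | rfl)
      · exact M.trans _ _ _ (h a' (Or.inl rfl)) ha'
      · exact M.trans _ _ _ (h b' (Or.inr rfl)) hb'
  unfold infm
  rw [hLb]

lemma supm_congr (M : Proset L) {a a' b b' : L} (ha : M.le a a') (ha' : M.le a' a)
    (hb : M.le b b') (hb' : M.le b' b) : supm M.le a b = supm M.le a' b' := by
  have hUb : Ub M.le {a, b} = Ub M.le {a', b'} := by
    ext z
    simp only [Ub, Set.mem_setOf_eq, Set.mem_insert_iff, Set.mem_singleton_iff]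
    constructor
    · rintro h c (rfl | rfl)
      · exact M.trans _ _ _ ha' (h a (Or.inl rfl))
      · exact M.trans _ _ _ hb' (h b (Or.inr rfl))
    · rintro h c (rfl | rfl)
      · exact M.trans _ _ _ ha (h a' (Or.inl rfl))
      · exact M.trans _ _ _ hb (h b' (Or.inr rfl))
  unfold supm
  rw [hUb]

lemma maxS_stable (M : Proset L) (S : Set L) : stable M.le (maxS M.le S) := by
  intro x hx y hy
  exact hy.2 x hx.1

lemma minS_stable (M : Proset L) (S : Set L) : stable M.le (minS M.le S) := by
  intro x hx y hy
  exact hx.2 y hy.1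

theorem stmt2 (M : Morgado L) (A B : Set L) (hA : A.Nonempty) (hB : B.Nonempty)
    (hAs : stable M.le A) (hBs : stable M.le B) :
    (stable M.le (⋃ a ∈ A, ⋃ b ∈ B, infm M.le a b) ∧
      ∀ a ∈ A, ∀ b ∈ B, (⋃ a' ∈ A, ⋃ b' ∈ B, infm M.le a' b') = infm M.le a b) ∧
    (stable M.le (⋃ a ∈ A, ⋃ b ∈ B, supm M.le a b) ∧
      ∀ a ∈ A, ∀ b ∈ B, (⋃ a' ∈ A, ⋃ b' ∈ B, supm M.le a' b') = supm M.le a b) := by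
  have hIeq : ∀ a ∈ A, ∀ b ∈ B, (⋃ a' ∈ A, ⋃ b' ∈ B, infm M.le a' b') = infm M.le a b := by
    intro a ha b hb
    ext u
    simp only [Set.mem_iUnion]
    constructor
    · rintro ⟨a', ha', b', hb', hu⟩
      rwa [infm_congr M.toProset (hAs a' ha' a ha) (hAs a ha a' ha')
        (hBs b' hb' b hb) (hBs b hb b' hb')] at hu
    · intro hu
      exact ⟨a, ha, b, hb, hu⟩
  have hSeq : ∀ a ∈ A, ∀ b ∈ B, (⋃ a' ∈ A, ⋃ b' ∈ B, supm M.le a' b') = supm M.le a b := by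
    intro a ha b hb
    ext u
    simp only [Set.mem_iUnion]
    constructor
    · rintro ⟨a', ha', b', hb', hu⟩
      rwa [supm_congr M.toProset (hAs a' ha' a ha) (hAs a ha a' ha')
        (hBs b' hb' b hb) (hBs b hb b' hb')] at hu
    · intro hu
      exact ⟨a, ha, b, hb, hu⟩
  obtain ⟨a, ha⟩ := hA
  obtain ⟨b, hb⟩ := hB
  refine ⟨⟨?_, hIeq⟩, ⟨?_, hSeq⟩⟩
  · rw [hIeq a ha b hb]
    exact maxS_stable M.toProset _
  · rw [hSeq a ha b hb]
    exact minS_stable M.toProset _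

end HyperSwap
end

section
/- Let L be a Morgado hyperlattice, A, B, C ⊆ L stable sets, and # ∈ {⋏, ⋎}. Then A # B ⪯ C if and only if a # b ⪯ c for some a ∈ A, b ∈ B, c ∈ C; and dually C ⪯ A # B iff c ⪯ a # b for some a ∈ A, b ∈ B, c ∈ C. -/
namespace HyperSwap

variable {L : Type*}

theorem stmt3 (M : Morgado L) (A B C : Set L)
    (hA : A.Nonempty) (hB : B.Nonempty) (hC : C.Nonempty)
    (hAs : stable M.le A) (hBs : stable M.le B) (hCs : stable M.le C) :
    (setLe M.le (⋃ a ∈ A, ⋃ b ∈ B, infm M.le a b) C ↔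
      ∃ a ∈ A, ∃ b ∈ B, ∃ c ∈ C, setLe M.le (infm M.le a b) {c}) ∧
    (setLe M.le C (⋃ a ∈ A, ⋃ b ∈ B, infm M.le a b) ↔
      ∃ a ∈ A, ∃ b ∈ B, ∃ c ∈ C, setLe M.le {c} (infm M.le a b)) ∧
    (setLe M.le (⋃ a ∈ A, ⋃ b ∈ B, supm M.le a b) C ↔
      ∃ a ∈ A, ∃ b ∈ B, ∃ c ∈ C, setLe M.le (supm M.le a b) {c}) ∧
    (setLe M.le C (⋃ a ∈ A, ⋃ b ∈ B, supm M.le a b) ↔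
      ∃ a ∈ A, ∃ b ∈ B, ∃ c ∈ C, setLe M.le {c} (supm M.le a b)) := by
  obtain ⟨a0, ha0⟩ := hA
  obtain ⟨b0, hb0⟩ := hB
  obtain ⟨c0, hc0⟩ := hC
  have tr := M.trans
  refine ⟨⟨?_, ?_⟩, ⟨?_, ?_⟩, ⟨?_, ?_⟩, ⟨?_, ?_⟩⟩
  · intro h
    refine ⟨a0, ha0, b0, hb0, c0, hc0, ?_⟩
    intro x hx y hy
    rcases hy with rfl
    exact h x (by simp only [Set.mem_iUnion]; exact ⟨a0, ha0, b0, hb0, hx⟩) y hc0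
  · rintro ⟨a, ha, b, hb, c, hc, h⟩ x hx c' hc'
    simp only [Set.mem_iUnion] at hx
    obtain ⟨a', ha', b', hb', hx⟩ := hx
    obtain ⟨y, hy⟩ := M.inf_ne a b
    have hxLb : x ∈ Lb M.le {a, b} := by
      intro z hz; rcases hz with rfl | hz
      · exact tr _ _ _ (hx.1 a' (by simp)) (hAs a' ha' z ha)
      · rcases hz with rfl; exact tr _ _ _ (hx.1 b' (by simp)) (hBs b' hb' z hb)
    have hxy : M.le x y := hy.2 x hxLb
    have hyc : M.le y c := h y hy c rfl
    exact tr _ _ _ (tr _ _ _ hxy hyc) (hCs c hc c' hc')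
  · intro h
    refine ⟨a0, ha0, b0, hb0, c0, hc0, ?_⟩
    intro y hy x hx
    rcases hy with rfl
    exact h y hc0 x (by simp only [Set.mem_iUnion]; exact ⟨a0, ha0, b0, hb0, hx⟩)
  · rintro ⟨a, ha, b, hb, c, hc, h⟩ c' hc' x hx
    simp only [Set.mem_iUnion] at hx
    obtain ⟨a', ha', b', hb', hx⟩ := hx
    obtain ⟨y, hy⟩ := M.inf_ne a b
    have hcy : M.le c y := h c rfl y hy
    have hyLb : y ∈ Lb M.le {a', b'} := by
      intro z hz; rcases hz with rfl | hz
      · exact tr _ _ _ (hy.1 a (by simp)) (hAs a ha z ha')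
      · rcases hz with rfl; exact tr _ _ _ (hy.1 b (by simp)) (hBs b hb z hb')
    have hyx : M.le y x := hx.2 y hyLb
    exact tr _ _ _ (tr _ _ _ (hCs c' hc' c hc) hcy) hyx
  · intro h
    refine ⟨a0, ha0, b0, hb0, c0, hc0, ?_⟩
    intro x hx y hy
    rcases hy with rfl
    exact h x (by simp only [Set.mem_iUnion]; exact ⟨a0, ha0, b0, hb0, hx⟩) y hc0
  · rintro ⟨a, ha, b, hb, c, hc, h⟩ x hx c' hc'
    simp only [Set.mem_iUnion] at hx
    obtain ⟨a', ha', b', hb', hx⟩ := hx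
    obtain ⟨y, hy⟩ := M.sup_ne a b
    have hyUb : y ∈ Ub M.le {a', b'} := by
      intro z hz; rcases hz with rfl | hz
      · exact tr _ _ _ (hAs z ha' a ha) (hy.1 a (by simp))
      · rcases hz with rfl; exact tr _ _ _ (hBs z hb' b hb) (hy.1 b (by simp))
    have hxy : M.le x y := hx.2 y hyUb
    have hyc : M.le y c := h y hy c rfl
    exact tr _ _ _ (tr _ _ _ hxy hyc) (hCs c hc c' hc')
  · intro h
    refine ⟨a0, ha0, b0, hb0, c0, hc0, ?_⟩
    intro y hy x hx
    rcases hy with rfl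
    exact h y hc0 x (by simp only [Set.mem_iUnion]; exact ⟨a0, ha0, b0, hb0, hx⟩)
  · rintro ⟨a, ha, b, hb, c, hc, h⟩ c' hc' x hx
    simp only [Set.mem_iUnion] at hx
    obtain ⟨a', ha', b', hb', hx⟩ := hx
    obtain ⟨y, hy⟩ := M.sup_ne a b
    have hcy : M.le c y := h c rfl y hy
    have hxUb : x ∈ Ub M.le {a, b} := by
      intro z hz; rcases hz with rfl | hz
      · exact tr _ _ _ (hAs z ha a' ha') (hx.1 a' (by simp))
      · rcases hz with rfl; exact tr _ _ _ (hBs z hb b' hb') (hx.1 b' (by simp))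
    have hyx : M.le y x := hy.2 x hxUb
    exact tr _ _ _ (tr _ _ _ (hCs c' hc' c hc) hcy) hyx

end HyperSwap
end

section
/- A hyperalgebra (L, ⋏, ⋎, ⊸) whose reduct (L, ⋏, ⋎) is a Morgado hyperlattice is a Sette implicative hyperlattice if and only if x ⊸ y = Max(R(x,y)) for all x, y ∈ L, where R(x,y) = {z ∈ L : x ⋏ z ⪯ y}. -/
namespace HyperSwap

variable {L : Type*}

theorem stmt4 (M : Morgado L) (imp : L → L → Set L)
    (himp_ne : ∀ x y, (imp x y).Nonempty) :
    (((∀ x y z, z ∈ imp x y → setLe M.le (infm M.le x z) {y}) ∧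
      (∀ x y z, setLe M.le (infm M.le x z) {y} → ∀ u ∈ imp x y, M.le z u) ∧
      (∀ x y z z', M.le z z' → M.le z' z → z ∈ imp x y → z' ∈ imp x y))
      ↔ (∀ x y, imp x y = maxS M.le (Rset M.le x y))) := by
  constructor
  · rintro ⟨I1, I2, I3⟩ x y
    ext z
    constructor
    · intro hz
      exact ⟨I1 x y z hz, fun b hb => I2 x y b hb z hz⟩
    · rintro ⟨hzR, hzMax⟩
      obtain ⟨w, hw⟩ := himp_ne x y
      exact I3 x y w z (hzMax w (I1 x y w hw)) (I2 x y z hzR w hw) hw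
  · intro h
    refine ⟨fun x y z hz => ?_, fun x y z hzR u hu => ?_, fun x y z z' hzz' hz'z hz => ?_⟩
    · rw [h] at hz; exact hz.1
    · rw [h] at hu; exact hu.2 z hzR
    · rw [h] at hz ⊢
      obtain ⟨hzR, hzMax⟩ := hz
      refine ⟨?_, fun b hb => M.trans b z z' (hzMax b hb) hzz'⟩
      intro a ha b hb
      rcases hb with rfl
      obtain ⟨c, hc⟩ := M.inf_ne x z
      have hac : M.le a c := by
        refine hc.2 a ?_
        intro t ht
        rcases ht with rfl | ht
        · exact ha.1 t (Or.inl rfl)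
        · rcases ht with rfl
          exact M.trans a z' t (ha.1 z' (Or.inr rfl)) hz'z
      exact M.trans a c b hac (hzR c hc b rfl)

end HyperSwap
end

section
/- In a Sette implicative hyperlattice L, for all stable nonempty sets A, B ⊆ L: A ⪯ B if and only if a ⊸ b ⊆ ⊤ for some a ∈ A and b ∈ B, if and only if a ⪯ b for some a ∈ A and b ∈ B, where ⊤ = Max(L). -/
namespace HyperSwap

variable {L : Type*}

theorem stmt5 (H : IHL L) (A B : Set L) (hA : A.Nonempty) (hB : B.Nonempty)
    (hAs : stable H.le A) (hBs : stable H.le B) :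
    (setLe H.le A B ↔ ∃ a ∈ A, ∃ b ∈ B, H.imp a b ⊆ topSet H.le) ∧
    (setLe H.le A B ↔ ∃ a ∈ A, ∃ b ∈ B, H.le a b) := by
  -- key: H.le a b ↔ H.imp a b ⊆ topSet H.le
  have key : ∀ a b : L, H.le a b ↔ H.imp a b ⊆ topSet H.le := by
    intro a b
    constructor
    · intro hab x hx
      rw [H.imp_eq] at hx
      obtain ⟨_, hmax⟩ := hx
      refine ⟨trivial, fun z _ => ?_⟩
      apply hmax
      intro u hu
      intro y hy
      simp only [Set.mem_singleton_iff] at hy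
      subst hy
      obtain ⟨hlb, _⟩ := hu
      exact H.trans _ _ _ (hlb a (by simp)) hab
    · intro hsub
      obtain ⟨t, ht⟩ := H.imp_ne a b
      have htop := hsub ht
      rw [H.imp_eq] at ht
      obtain ⟨htR, _⟩ := ht
      -- a ∈ infm a t, so le a b
      have hat : H.le a t := htop.2 a trivial
      have hinf : a ∈ infm H.le a t := by
        refine ⟨fun c hc => ?_, fun u hu => ?_⟩
        · simp only [Set.mem_insert_iff, Set.mem_singleton_iff] at hc
          rcases hc with rfl | rfl
          · exact H.refl _
          · exact hat
        · exact hu a (by simp)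
      exact htR a hinf b rfl
  have le_iff : setLe H.le A B ↔ ∃ a ∈ A, ∃ b ∈ B, H.le a b := by
    constructor
    · intro h
      obtain ⟨a, ha⟩ := hA
      obtain ⟨b, hb⟩ := hB
      exact ⟨a, ha, b, hb, h a ha b hb⟩
    · rintro ⟨a, ha, b, hb, hab⟩ a' ha' b' hb'
      exact H.trans _ _ _ (hAs a' ha' a ha) (H.trans _ _ _ hab (hBs b hb b' hb'))
  refine ⟨?_, le_iff⟩
  rw [le_iff]
  constructor
  · rintro ⟨a, ha, b, hb, hab⟩
    exact ⟨a, ha, b, hb, (key a b).mp hab⟩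
  · rintro ⟨a, ha, b, hb, hsub⟩
    exact ⟨a, ha, b, hb, (key a b).mpr hsub⟩

end HyperSwap
end

section
/- Let L be a Sette implicative hyperlattice and S = {z ∈ L × L : z₁ ⋎ z₂ ≡ ⊤} with the relation z ⪯ w iff z₁ ⪯ w₁. Then ⪯ is a preorder on S making S a Morgado hyperlattice in which, for z, w ∈ S, the infimoid of {z, w} equals {u ∈ S : u₁ ∈ z₁ ⋏ w₁} and the supremoid equals {u ∈ S : u₁ ∈ z₁ ⋎ w₁}; moreover z ≡ w in S iff z₁ ≡ w₁ in L. -/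
namespace HyperSwap

variable {L : Type*}

section Aux

lemma mem_pair_lb {r : L → L → Prop} {x y m : L} (hx : r m x) (hy : r m y) :
    m ∈ Lb r {x, y} := by
  intro b hb
  simp only [Set.mem_insert_iff, Set.mem_singleton_iff] at hb
  rcases hb with rfl | rfl
  · exact hx
  · exact hy

lemma mem_pair_ub {r : L → L → Prop} {x y m : L} (hx : r x m) (hy : r y m) :
    m ∈ Ub r {x, y} := by
  intro b hb
  simp only [Set.mem_insert_iff, Set.mem_singleton_iff] at hb
  rcases hb with rfl | rfl
  · exact hx
  · exact hy

lemma infm_comm (r : L → L → Prop) (x y : L) : infm r x y = infm r y x := by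
  simp [infm, Set.pair_comm]

lemma le_of_mem_top (H : IHL L) {t : L} (ht : t ∈ topSet H.le) (s : L) : H.le s t :=
  ht.2 s (Set.mem_univ s)

/-- `Rset` is downward closed. -/
lemma Rset_dcl (H : IHL L) {x c t e : L} (hte : H.le t e) (he : e ∈ Rset H.le x c) :
    t ∈ Rset H.le x c := by
  intro m hm b hb
  rw [Set.mem_singleton_iff] at hb; subst hb
  obtain ⟨n, hn⟩ := H.inf_ne x e
  have hmn : H.le m n := hn.2 m (mem_pair_lb (hm.1 x (Set.mem_insert _ _))
    (H.trans _ _ _ (hm.1 t (Set.mem_insert_of_mem _ rfl)) hte))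
  exact H.trans _ _ _ hmn (he n hn _ rfl)

lemma key_lift (H : IHL L) {x1 x2 y1 y2 a b : L}
    (hz : setEquiv H.le (supm H.le x1 x2) (topSet H.le))
    (hw : setEquiv H.le (supm H.le y1 y2) (topSet H.le))
    (ha : a ∈ infm H.le x1 y1) (hb : b ∈ supm H.le x2 y2) :
    setEquiv H.le (supm H.le a b) (topSet H.le) := by
  constructor
  · intro s _ t ht
    exact le_of_mem_top H ht s
  · intro t ht s hs
    have hsa : H.le a s := hs.1 a (Set.mem_insert _ _)
    have hsb : H.le b s := hs.1 b (Set.mem_insert_of_mem _ rfl)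
    have hx2s : H.le x2 s := H.trans _ _ _ (hb.1 x2 (Set.mem_insert _ _)) hsb
    have hy2s : H.le y2 s := H.trans _ _ _ (hb.1 y2 (Set.mem_insert_of_mem _ rfl)) hsb
    -- Step 1: t ∈ Rset x1 s
    have hy1R : y1 ∈ Rset H.le x1 s := by
      intro m hm c hc
      rw [Set.mem_singleton_iff] at hc; subst hc
      exact H.trans _ _ _ (ha.2 m hm.1) hsa
    have hy2R : y2 ∈ Rset H.le x1 s := by
      intro m hm c hc
      rw [Set.mem_singleton_iff] at hc; subst hc
      exact H.trans _ _ _ (hm.1 y2 (Set.mem_insert_of_mem _ rfl)) hy2s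
    obtain ⟨e, he⟩ := H.imp_ne x1 s
    rw [H.imp_eq] at he
    obtain ⟨q, hq⟩ := H.sup_ne y1 y2
    have hqe : H.le q e := hq.2 e (mem_pair_ub (he.2 y1 hy1R) (he.2 y2 hy2R))
    have htq : H.le t q := hw.2 t ht q hq
    have htR : t ∈ Rset H.le x1 s := Rset_dcl H (H.trans _ _ _ htq hqe) he.1
    -- Step 2: t ∈ Rset t s
    have hx1R : x1 ∈ Rset H.le t s := by
      intro m hm c hc
      rw [Set.mem_singleton_iff] at hc; subst hc
      exact htR m (by rw [infm_comm]; exact hm) _ rfl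
    have hx2R : x2 ∈ Rset H.le t s := by
      intro m hm c hc
      rw [Set.mem_singleton_iff] at hc; subst hc
      exact H.trans _ _ _ (hm.1 x2 (Set.mem_insert_of_mem _ rfl)) hx2s
    obtain ⟨e', he'⟩ := H.imp_ne t s
    rw [H.imp_eq] at he'
    obtain ⟨p, hp⟩ := H.sup_ne x1 x2
    have hpe : H.le p e' := hp.2 e' (mem_pair_ub (he'.2 x1 hx1R) (he'.2 x2 hx2R))
    have htp : H.le t p := hz.2 t ht p hp
    have htRt : t ∈ Rset H.le t s := Rset_dcl H (H.trans _ _ _ htp hpe) he'.1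
    -- Conclude
    obtain ⟨n, hn⟩ := H.inf_ne t t
    have htn : H.le t n := hn.2 t (mem_pair_lb (H.refl t) (H.refl t))
    exact H.trans _ _ _ htn (htRt n hn s rfl)

lemma sup_lift (H : IHL L) {x1 x2 a : L}
    (hz : setEquiv H.le (supm H.le x1 x2) (topSet H.le))
    (h : H.le x1 a) :
    setEquiv H.le (supm H.le a x2) (topSet H.le) := by
  constructor
  · intro s _ t ht
    exact le_of_mem_top H ht s
  · intro t ht s hs
    obtain ⟨p, hp⟩ := H.sup_ne x1 x2
    have hps : H.le p s := hp.2 s (mem_pair_ub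
      (H.trans _ _ _ h (hs.1 a (Set.mem_insert _ _)))
      (hs.1 x2 (Set.mem_insert_of_mem _ rfl)))
    exact H.trans _ _ _ (hz.2 t ht p hp) hps

end Aux

theorem stmt8 (H : IHL L) :
    (∀ z : SDom H, swapLe H z z) ∧
    (∀ z w u : SDom H, swapLe H z w → swapLe H w u → swapLe H z u) ∧
    (∀ z w : SDom H, infm (swapLe H) z w = swapInf H z w) ∧
    (∀ z w : SDom H, supm (swapLe H) z w = swapSup H z w) ∧
    (∀ z w : SDom H, (infm (swapLe H) z w).Nonempty ∧ (supm (swapLe H) z w).Nonempty) ∧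
    (∀ z w : SDom H, (swapLe H z w ∧ swapLe H w z) ↔
      (H.le z.1.1 w.1.1 ∧ H.le w.1.1 z.1.1)) := by
  have hinf : ∀ z w : SDom H, infm (swapLe H) z w = swapInf H z w := by
    intro z w
    ext u
    constructor
    · rintro ⟨hu_lb, hu_max⟩
      have huz : H.le u.1.1 z.1.1 := hu_lb z (Set.mem_insert _ _)
      have huw : H.le u.1.1 w.1.1 := hu_lb w (Set.mem_insert_of_mem _ rfl)
      obtain ⟨a, ha⟩ := H.inf_ne z.1.1 w.1.1
      obtain ⟨b, hbm⟩ := H.sup_ne z.1.2 w.1.2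
      have hs : (a, b) ∈ SDom H := key_lift H z.2 w.2 ha hbm
      have hsu : H.le a u.1.1 :=
        hu_max ⟨(a, b), hs⟩ (mem_pair_lb (ha.1 z.1.1 (Set.mem_insert _ _))
          (ha.1 w.1.1 (Set.mem_insert_of_mem _ rfl)))
      refine ⟨mem_pair_lb huz huw, ?_⟩
      intro c hc
      exact H.trans _ _ _ (ha.2 c hc) hsu
    · rintro hu
      refine ⟨mem_pair_lb (hu.1 z.1.1 (Set.mem_insert _ _))
        (hu.1 w.1.1 (Set.mem_insert_of_mem _ rfl)), ?_⟩
      intro v hv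
      exact hu.2 v.1.1 (mem_pair_lb (hv z (Set.mem_insert _ _))
        (hv w (Set.mem_insert_of_mem _ rfl)))
  have hsup : ∀ z w : SDom H, supm (swapLe H) z w = swapSup H z w := by
    intro z w
    ext u
    constructor
    · rintro ⟨hu_ub, hu_min⟩
      have hzu : H.le z.1.1 u.1.1 := hu_ub z (Set.mem_insert _ _)
      have hwu : H.le w.1.1 u.1.1 := hu_ub w (Set.mem_insert_of_mem _ rfl)
      obtain ⟨a, ha⟩ := H.sup_ne z.1.1 w.1.1
      have hs : (a, z.1.2) ∈ SDom H := sup_lift H z.2 (ha.1 z.1.1 (Set.mem_insert _ _))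
      have hus : H.le u.1.1 a :=
        hu_min ⟨(a, z.1.2), hs⟩ (mem_pair_ub (ha.1 z.1.1 (Set.mem_insert _ _))
          (ha.1 w.1.1 (Set.mem_insert_of_mem _ rfl)))
      refine ⟨mem_pair_ub hzu hwu, ?_⟩
      intro c hc
      exact H.trans _ _ _ hus (ha.2 c hc)
    · rintro hu
      refine ⟨mem_pair_ub (hu.1 z.1.1 (Set.mem_insert _ _))
        (hu.1 w.1.1 (Set.mem_insert_of_mem _ rfl)), ?_⟩
      intro v hv
      exact hu.2 v.1.1 (mem_pair_ub (hv z (Set.mem_insert _ _))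
        (hv w (Set.mem_insert_of_mem _ rfl)))
  refine ⟨fun z => H.refl z.1.1, fun z w u h1 h2 => H.trans _ _ _ h1 h2, hinf, hsup, ?_, ?_⟩
  · intro z w
    constructor
    · obtain ⟨a, ha⟩ := H.inf_ne z.1.1 w.1.1
      obtain ⟨b, hbm⟩ := H.sup_ne z.1.2 w.1.2
      exact ⟨⟨(a, b), key_lift H z.2 w.2 ha hbm⟩, by rw [hinf]; exact ha⟩
    · obtain ⟨a, ha⟩ := H.sup_ne z.1.1 w.1.1
      exact ⟨⟨(a, z.1.2), sup_lift H z.2 (ha.1 z.1.1 (Set.mem_insert _ _))⟩,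
        by rw [hsup]; exact ha⟩
  · intro z w
    exact Iff.rfl

end HyperSwap
end

section
/- Let L be a Sette implicative hyperlattice. The hyper swap structure S(L) on S = {z ∈ L × L : z₁ ⋎ z₂ ≡ ⊤}, with z ⊸ w := {u ∈ S : u₁ ∈ z₁ ⊸ w₁}, satisfies z ⊸ w = Max({u ∈ S : z ⋏ u ⪯ w}); hence S(L) is itself a Sette implicative hyperlattice. -/
namespace HyperSwap

variable {L : Type*}

lemma supm_top (H : IHL L) {a t : L} (ht : t ∈ topSet H.le) :
    supm H.le a t = topSet H.le := by
  ext x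
  constructor
  · rintro ⟨hub, _⟩
    have htx : H.le t x := hub t (by simp)
    exact ⟨trivial, fun b _ => H.trans _ _ _ (ht.2 b trivial) htx⟩
  · intro hx
    refine ⟨?_, ?_⟩
    · intro b hb
      exact hx.2 b trivial
    · intro b hb
      have htb : H.le t b := hb t (by simp)
      exact H.trans _ _ _ (ht.2 x trivial) htb

/-- Every element of `L` lifts to a snapshot. -/
lemma lift (H : IHL L) (a : L) : ∃ b, (⟨a, b⟩ : L × L) ∈ SDom H := by
  by_cases h : (topSet H.le).Nonempty
  · obtain ⟨t, ht⟩ := h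
    refine ⟨t, ?_⟩
    show setEquiv H.le (supm H.le a t) (topSet H.le)
    rw [supm_top H ht]
    exact ⟨fun x hx y hy => hy.2 x trivial, fun x hx y hy => hy.2 x trivial⟩
  · refine ⟨a, ⟨?_, ?_⟩⟩
    · intro x hx y hy; exact absurd ⟨y, hy⟩ h
    · intro x hx y hy; exact absurd ⟨x, hx⟩ h

lemma mem_infm_swap (H : IHL L) (z w u : SDom H) :
    u ∈ infm (swapLe H) z w ↔ u.1.1 ∈ infm H.le z.1.1 w.1.1 := by
  constructor
  · rintro ⟨hlb, hmax⟩
    refine ⟨?_, ?_⟩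
    · rintro b (rfl | rfl)
      · exact hlb z (by simp)
      · exact hlb w (by simp)
    · intro c hc
      obtain ⟨b, hb⟩ := lift H c
      have hcS : (⟨⟨c, b⟩, hb⟩ : SDom H) ∈ Lb (swapLe H) {z, w} := by
        rintro v (rfl | rfl)
        · exact hc v.1.1 (by simp)
        · exact hc v.1.1 (by simp)
      exact hmax _ hcS
  · intro hu
    refine ⟨?_, ?_⟩
    · rintro v (rfl | rfl)
      · exact hu.1 v.1.1 (by simp)
      · exact hu.1 v.1.1 (by simp)
    · intro v hv
      refine hu.2 v.1.1 ?_
      rintro b (rfl | rfl)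
      · exact hv z (by simp)
      · exact hv w (by simp)

lemma mem_Rset_swap (H : IHL L) (z w u : SDom H) :
    u ∈ Rset (swapLe H) z w ↔ u.1.1 ∈ Rset H.le z.1.1 w.1.1 := by
  constructor
  · intro hu c hc y hy
    obtain ⟨b, hb⟩ := lift H c
    have : (⟨⟨c, b⟩, hb⟩ : SDom H) ∈ infm (swapLe H) z u :=
      (mem_infm_swap H z u _).2 hc
    have h2 := hu _ this w rfl
    have hy' : y = w.1.1 := hy
    subst hy'
    exact h2
  · intro hu v hv y hy
    have h1 : v.1.1 ∈ infm H.le z.1.1 u.1.1 := (mem_infm_swap H z u v).1 hv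
    have := hu v.1.1 h1 w.1.1 rfl
    subst hy
    exact this

theorem stmt10 (H : IHL L) (z w : SDom H) :
    swapImp H z w = maxS (swapLe H) (Rset (swapLe H) z w) ∧
    (swapImp H z w).Nonempty := by
  constructor
  · ext u
    constructor
    · intro hu
      have hu' : u.1.1 ∈ maxS H.le (Rset H.le z.1.1 w.1.1) := by
        rw [← H.imp_eq]; exact hu
      refine ⟨(mem_Rset_swap H z w u).2 hu'.1, ?_⟩
      intro v hv
      exact hu'.2 v.1.1 ((mem_Rset_swap H z w v).1 hv)
    · rintro ⟨h1, h2⟩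
      show u.1.1 ∈ H.imp z.1.1 w.1.1
      rw [H.imp_eq]
      refine ⟨(mem_Rset_swap H z w u).1 h1, ?_⟩
      intro c hc
      obtain ⟨b, hb⟩ := lift H c
      exact h2 ⟨⟨c, b⟩, hb⟩ ((mem_Rset_swap H z w _).2 hc)
  · obtain ⟨a, ha⟩ := H.imp_ne z.1.1 w.1.1
    obtain ⟨b, hb⟩ := lift H a
    exact ⟨⟨⟨a, b⟩, hb⟩, ha⟩

end HyperSwap
end

section
/- Let L be a Sette implicative hyperlattice and S(L) its hyper swap structure with negation ÷z := {u ∈ S : u₁ = z₂ and u₂ ⪯ z₁}. Then S(L) satisfies (H1') z ⋎ ÷z ≡ ⊤ and (H2') ÷÷z ⪯ z for every z ∈ S; that is, S(L) is a hyper C_ω algebra. Moreover its set of designated values D = {z ∈ S : z₁ ∈ ⊤_L} equals Max(S). -/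
namespace HyperSwap

variable {L : Type*}

theorem stmt11 (H : IHL L) :
    (∀ z : SDom H,
      setEquiv (swapLe H) (⋃ y ∈ swapDiv H z, supm (swapLe H) z y) (topSet (swapLe H))) ∧
    (∀ z : SDom H, setLe (swapLe H) (⋃ y ∈ swapDiv H z, swapDiv H y) {z}) ∧
    (∀ z : SDom H, (swapDiv H z).Nonempty) ∧
    ({z : SDom H | z.1.1 ∈ topSet H.le} = topSet (swapLe H)) := by
  -- there is a top element of L (using x ⊸ x)
  have htop : ∀ _x : L, ∃ t, t ∈ topSet H.le := by
    intro x
    obtain ⟨t, ht⟩ := H.imp_ne x x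
    rw [H.imp_eq] at ht
    refine ⟨t, trivial, fun b _ => ?_⟩
    apply ht.2
    intro a ha c hc
    rw [Set.eq_of_mem_singleton hc]
    exact ha.1 x (Set.mem_insert x _)
  -- (b, t) is a snapshot whenever t is a top element
  have hsnap : ∀ b t : L, t ∈ topSet H.le → ((b, t) : L × L) ∈ SDom H := by
    intro b t ht
    constructor
    · intro s _ m hm
      exact hm.2 s trivial
    · intro m _ s hs
      refine H.trans m t s (ht.2 m trivial) ?_
      exact hs.1 t (by right; rfl)
  have part4 : {z : SDom H | z.1.1 ∈ topSet H.le} = topSet (swapLe H) := by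
    ext z
    constructor
    · intro hz
      exact ⟨trivial, fun w _ => hz.2 w.1.1 trivial⟩
    · intro hz
      refine ⟨trivial, fun b _ => ?_⟩
      obtain ⟨t, ht⟩ := htop b
      exact hz.2 ⟨(b, t), hsnap b t ht⟩ trivial
  have part1 : ∀ z : SDom H,
      setEquiv (swapLe H) (⋃ y ∈ swapDiv H z, supm (swapLe H) z y) (topSet (swapLe H)) := by
    intro z
    constructor
    · intro u _ t ht
      exact ht.2 u trivial
    · intro t ht u hu
      simp only [Set.mem_iUnion] at hu
      obtain ⟨y, hy, hu⟩ := hu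
      have h1 : H.le z.1.1 u.1.1 := hu.1 z (Set.mem_insert z _)
      have h2 : H.le z.1.2 u.1.1 := by
        have h := hu.1 y (by right; rfl)
        unfold swapLe at h
        rwa [hy.1] at h
      obtain ⟨s, hs⟩ := H.sup_ne z.1.1 z.1.2
      have htt : t.1.1 ∈ topSet H.le := by
        have h := Set.ext_iff.mp part4 t
        exact h.2 ht
      have hts : H.le t.1.1 s := z.2.2 t.1.1 htt s hs
      have hsu : H.le s u.1.1 := by
        refine hs.2 u.1.1 ?_
        rintro c (rfl | hc)
        · exact h1
        · rw [Set.eq_of_mem_singleton hc]; exact h2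
      exact H.trans _ _ _ hts hsu
  refine ⟨part1, ?_, ?_, part4⟩
  · intro z u hu w hw
    simp only [Set.mem_iUnion] at hu
    obtain ⟨y, hy, hu⟩ := hu
    rw [Set.eq_of_mem_singleton hw]
    show H.le u.1.1 z.1.1
    rw [hu.1]
    exact hy.2
  · intro z
    have hmem : ((z.1.2, z.1.1) : L × L) ∈ SDom H := by
      have hcomm : supm H.le z.1.2 z.1.1 = supm H.le z.1.1 z.1.2 := by
        unfold supm Ub
        rw [Set.pair_comm]
      show setEquiv H.le (supm H.le z.1.2 z.1.1) (topSet H.le)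
      rw [hcomm]
      exact z.2
    exact ⟨⟨(z.1.2, z.1.1), hmem⟩, rfl, H.refl z.1.1⟩

end HyperSwap
end

section
/- Let L be a Sette implicative hyperlattice and S(L) its hyper swap structure. For z, z′ ∈ S(L): z₁ = z′₁ if and only if there exists w ∈ S(L) with z ∈ ÷w and z′ ∈ ÷w. -/
namespace HyperSwap

variable {L : Type*}

theorem stmt12 (H : IHL L) (z z' : SDom H) :
    z.1.1 = z'.1.1 ↔ ∃ w : SDom H, z ∈ swapDiv H w ∧ z' ∈ swapDiv H w := by
  constructor
  · intro h
    obtain ⟨s, hs⟩ := H.sup_ne z.1.2 z'.1.2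
    have hsz2 : H.le z.1.2 s := hs.1 _ (Or.inl rfl)
    have hsz2' : H.le z'.1.2 s := hs.1 _ (Or.inr rfl)
    have hw : ((s, z.1.1) : L × L) ∈ SDom H := by
      obtain ⟨hA, hB⟩ := z.2
      constructor
      · intro u hu t ht
        exact ht.2 u trivial
      · intro t ht u hu
        obtain ⟨v, hv⟩ := H.sup_ne z.1.1 z.1.2
        have htv : H.le t v := hB t ht v hv
        have huUB : v ∈ Ub H.le {z.1.1, z.1.2} := hv.1
        have huUB2 : u ∈ Ub H.le {z.1.1, z.1.2} := by
          intro b hb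
          rcases hb with rfl | hb
          · exact hu.1 _ (Or.inr rfl)
          · simp only [Set.mem_singleton_iff] at hb
            subst hb
            exact H.trans _ _ _ hsz2 (hu.1 _ (Or.inl rfl))
        exact H.trans _ _ _ htv (hv.2 u huUB2)
    exact ⟨⟨(s, z.1.1), hw⟩, ⟨rfl, hsz2⟩, ⟨h.symm, hsz2'⟩⟩
  · rintro ⟨w, ⟨h1, _⟩, ⟨h2, _⟩⟩
    rw [h1, h2]

end HyperSwap
end

section
/- Let L be a Sette implicative hyperlattice and S(L) its hyper swap structure. For every z ∈ S(L): ÷÷z = {u ∈ S : u₁ ⪯ z₁ and u₂ ⪯ z₂}, hence z ∈ ÷÷z; moreover ÷z is stable (all its elements are pairwise similar). -/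
namespace HyperSwap

variable {L : Type*}

theorem stmt13 (H : IHL L) (z : SDom H) :
    ((⋃ y ∈ swapDiv H z, swapDiv H y) =
      {u : SDom H | H.le u.1.1 z.1.1 ∧ H.le u.1.2 z.1.2}) ∧
    (z ∈ ⋃ y ∈ swapDiv H z, swapDiv H y) ∧
    stable (swapLe H) (swapDiv H z) := by
  have hrefl := H.refl
  have htr := H.trans
  have hset : (⋃ y ∈ swapDiv H z, swapDiv H y) =
      {u : SDom H | H.le u.1.1 z.1.1 ∧ H.le u.1.2 z.1.2} := by
    ext u
    simp only [Set.mem_iUnion, Set.mem_setOf_eq, swapDiv]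
    constructor
    · rintro ⟨y, ⟨hy1, hy2⟩, hu1, hu2⟩
      exact ⟨hu1 ▸ hy2, hy1 ▸ hu2⟩
    · rintro ⟨h1, h2⟩
      have hy : (z.1.2, u.1.1) ∈ SDom H := by
        constructor
        · intro s _ t ht
          exact ht.2 s trivial
        · intro t ht s' hs'
          obtain ⟨s, hs⟩ := H.sup_ne u.1.1 u.1.2
          have hsUb : s' ∈ Ub H.le {u.1.1, u.1.2} := by
            intro b hb
            simp only [Set.mem_insert_iff, Set.mem_singleton_iff] at hb
            rcases hb with rfl | rfl
            · exact hs'.1 u.1.1 (Or.inr rfl)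
            · exact htr _ _ _ h2 (hs'.1 z.1.2 (Or.inl rfl))
          have hts : H.le t s := u.2.2 t ht s hs
          have hss' : H.le s s' := hs.2 s' hsUb
          exact htr _ _ _ hts hss'
      exact ⟨⟨(z.1.2, u.1.1), hy⟩, ⟨rfl, h1⟩, rfl, h2⟩
  refine ⟨hset, ?_, ?_⟩
  · rw [hset]; exact ⟨hrefl _, hrefl _⟩
  · intro a ha b hb
    show H.le a.1.1 b.1.1
    rw [ha.1, hb.1]
    exact hrefl _

end HyperSwap
end

section
/- Every hyper swap structure S(L) over a Sette implicative hyperlattice L is an enriched hyper C_ω algebra, i.e., it additionally satisfies: (E0) x ∈ ÷÷x; (E1) ÷x is stable; (E2) the relation x ∼ y (defined by: there exists z with x, y ∈ ÷z) is transitive; (E3) if x ⋎ y ≡ ⊤ then there exists z with x ∼ z and y ∼ ÷z; (E4) if x ∼ y and ÷x ∼ ÷y then x = y. -/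
namespace HyperSwap

variable {L : Type*}

lemma supm_comm (r : L → L → Prop) (a b : L) : supm r a b = supm r b a := by
  unfold supm minS Ub
  rw [Set.pair_comm]

/-- If `a ⋎ b ≡ ⊤` and `a ⪯ a'` then `a' ⋎ b ≡ ⊤`. -/
lemma supm_top_mono (H : IHL L) {a a' b : L}
    (h : setEquiv H.le (supm H.le a b) (topSet H.le)) (haa : H.le a a') :
    setEquiv H.le (supm H.le a' b) (topSet H.le) := by
  obtain ⟨s, hs⟩ := H.sup_ne a b
  constructor
  · intro u _ t ht
    exact ht.2 u trivial
  · intro t ht u hu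
    have hub : u ∈ Ub H.le {a, b} := by
      intro c hc
      rcases hc with rfl | hc
      · exact H.trans _ _ _ haa (hu.1 a' (Set.mem_insert _ _))
      · rcases hc with rfl
        exact hu.1 c (Set.mem_insert_of_mem _ rfl)
    exact H.trans _ _ _ (h.2 t ht s hs) (hs.2 u hub)

/-- The "mirror" of a snapshot is a snapshot. -/
lemma mirror_mem_SDom (H : IHL L) (z : SDom H) : (z.1.2, z.1.1) ∈ SDom H := by
  show setEquiv H.le (supm H.le z.1.2 z.1.1) (topSet H.le)
  rw [supm_comm]
  exact z.2

/-- Two snapshots are similar iff their first coordinates coincide. -/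
lemma sim_iff (H : IHL L) (x y : SDom H) :
    simRel (swapDiv H) x y ↔ x.1.1 = y.1.1 := by
  constructor
  · rintro ⟨z, hx, hy⟩
    rw [hx.1, hy.1]
  · intro hxy
    obtain ⟨s, hs⟩ := H.sup_ne x.1.2 y.1.2
    have hx2s : H.le x.1.2 s := hs.1 _ (Set.mem_insert _ _)
    have hy2s : H.le y.1.2 s := hs.1 _ (Set.mem_insert_of_mem _ rfl)
    have hmem : (s, x.1.1) ∈ SDom H := by
      have hx' : setEquiv H.le (supm H.le x.1.2 x.1.1) (topSet H.le) := by
        rw [supm_comm]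
        exact x.2
      exact supm_top_mono H hx' hx2s
    exact ⟨⟨(s, x.1.1), hmem⟩, ⟨rfl, hx2s⟩, ⟨hxy.symm, hy2s⟩⟩

theorem stmt14 (H : IHL L) :
    (∀ x : SDom H, x ∈ ⋃ y ∈ swapDiv H x, swapDiv H y) ∧
    (∀ x : SDom H, stable (swapLe H) (swapDiv H x)) ∧
    (∀ x y z : SDom H,
      simRel (swapDiv H) x y → simRel (swapDiv H) y z → simRel (swapDiv H) x z) ∧
    (∀ x y : SDom H,
      setEquiv (swapLe H) (supm (swapLe H) x y) (topSet (swapLe H)) →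
      ∃ z, simRel (swapDiv H) x z ∧ ∀ w ∈ swapDiv H z, simRel (swapDiv H) y w) ∧
    (∀ x y : SDom H, simRel (swapDiv H) x y →
      (∀ a ∈ swapDiv H x, ∀ b ∈ swapDiv H y, simRel (swapDiv H) a b) → x = y) := by
  refine ⟨?_, ?_, ?_, ?_, ?_⟩
  · -- E0
    intro x
    refine Set.mem_iUnion₂.2 ⟨⟨(x.1.2, x.1.1), mirror_mem_SDom H x⟩, ⟨rfl, H.refl _⟩,
      ⟨rfl, H.refl _⟩⟩
  · -- E1
    intro x a ha b hb
    show H.le a.1.1 b.1.1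
    rw [ha.1, hb.1]
    exact H.refl _
  · -- E2
    intro x y z hxy hyz
    rw [sim_iff] at hxy hyz ⊢
    exact hxy.trans hyz
  · -- E3
    intro x y hsup
    have key : setEquiv H.le (supm H.le x.1.1 y.1.1) (topSet H.le) := by
      constructor
      · intro u _ t ht
        exact ht.2 u trivial
      · intro m hm s' hs'
        have hx1s : H.le x.1.1 s' := hs'.1 _ (Set.mem_insert _ _)
        have hy1s : H.le y.1.1 s' := hs'.1 _ (Set.mem_insert_of_mem _ rfl)
        -- (m, m) is a snapshot
        have hmmS : (m, m) ∈ SDom H := by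
          constructor
          · intro u _ t ht
            exact ht.2 u trivial
          · intro t ht u hu
            exact H.trans _ _ _ (hm.2 t trivial) (hu.1 m (Set.mem_insert _ _))
        -- (s', x₂) is a snapshot
        have hsxS : (s', x.1.2) ∈ SDom H := by
          have hx' : setEquiv H.le (supm H.le x.1.1 x.1.2) (topSet H.le) := x.2
          exact supm_top_mono H hx' hx1s
        -- (m, m) is a top snapshot
        have htopS : (⟨(m, m), hmmS⟩ : SDom H) ∈ topSet (swapLe H) := by
          refine ⟨trivial, fun v _ => ?_⟩
          exact hm.2 v.1.1 trivial
        -- (s', x₂) belongs to the swap supremoid of x, y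
        have hsupS : (⟨(s', x.1.2), hsxS⟩ : SDom H) ∈ supm (swapLe H) x y := by
          constructor
          · intro c hc
            rcases hc with rfl | hc
            · exact hx1s
            · rcases hc with rfl
              exact hy1s
          · intro v hv
            refine hs'.2 v.1.1 ?_
            intro c hc
            rcases hc with rfl | hc
            · exact hv x (Set.mem_insert _ _)
            · rcases hc with rfl
              exact hv y (Set.mem_insert_of_mem _ rfl)
        exact hsup.2 _ htopS _ hsupS
    refine ⟨⟨(x.1.1, y.1.1), key⟩, (sim_iff H _ _).2 rfl, fun w hw => ?_⟩
    exact (sim_iff H _ _).2 hw.1.symm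
  · -- E4
    intro x y hxy h
    have h1 : x.1.1 = y.1.1 := (sim_iff H x y).1 hxy
    have ha : (⟨(x.1.2, x.1.1), mirror_mem_SDom H x⟩ : SDom H) ∈ swapDiv H x :=
      ⟨rfl, H.refl _⟩
    have hb : (⟨(y.1.2, y.1.1), mirror_mem_SDom H y⟩ : SDom H) ∈ swapDiv H y :=
      ⟨rfl, H.refl _⟩
    have h2 : x.1.2 = y.1.2 := (sim_iff H _ _).1 (h _ ha _ hb)
    exact Subtype.ext (Prod.ext h1 h2)

end HyperSwap
end

section
/- Let f : L₁ → L₂ be a morphism of Sette implicative hyperlattices. Then the map S(f) : S(L₁) → S(L₂) defined by S(f)(z₁, z₂) = (f(z₁), f(z₂)) is well defined (i.e., maps snapshots to snapshots) and is a morphism of hyper C_ω algebras; moreover S preserves identities and composition, so S is a functor from the category of Sette implicative hyperlattices to the category of hyper C_ω algebras. -/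
namespace HyperSwap

variable {L : Type*}

/-- `x ⊸ x = ⊤` in any IHL. -/
lemma imp_self_eq_top (H : IHL L) (x : L) : H.imp x x = topSet H.le := by
  rw [H.imp_eq]
  have : Rset H.le x x = Set.univ := by
    ext z
    simp only [Rset, Set.mem_setOf_eq, Set.mem_univ, iff_true]
    intro a ha b hb
    rw [Set.mem_singleton_iff] at hb
    subst hb
    exact ha.1 _ (Set.mem_insert _ _)
  rw [this]; rfl

theorem stmt16 {L₁ L₂ L₃ : Type*} (H₁ : IHL L₁) (H₂ : IHL L₂) (H₃ : IHL L₃)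
    (f : L₁ → L₂) (g : L₂ → L₃)
    (hf1 : ∀ x y z, z ∈ infm H₁.le x y → f z ∈ infm H₂.le (f x) (f y))
    (hf2 : ∀ x y z, z ∈ supm H₁.le x y → f z ∈ supm H₂.le (f x) (f y))
    (hf3 : ∀ x y z, z ∈ H₁.imp x y → f z ∈ H₂.imp (f x) (f y))
    (hg1 : ∀ x y z, z ∈ infm H₂.le x y → g z ∈ infm H₃.le (g x) (g y))
    (hg2 : ∀ x y z, z ∈ supm H₂.le x y → g z ∈ supm H₃.le (g x) (g y))
    (hg3 : ∀ x y z, z ∈ H₂.imp x y → g z ∈ H₃.imp (g x) (g y)) :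
    -- S(f) maps snapshots to snapshots:
    (∀ z ∈ SDom H₁, Prod.map f f z ∈ SDom H₂) ∧
    -- S(f) preserves the hyperoperations of the hyper swap structures:
    (∀ z w u : L₁ × L₁, z ∈ SDom H₁ → w ∈ SDom H₁ → u ∈ SDom H₁ →
      u.1 ∈ infm H₁.le z.1 w.1 → f u.1 ∈ infm H₂.le (f z.1) (f w.1)) ∧
    (∀ z w u : L₁ × L₁, z ∈ SDom H₁ → w ∈ SDom H₁ → u ∈ SDom H₁ →
      u.1 ∈ supm H₁.le z.1 w.1 → f u.1 ∈ supm H₂.le (f z.1) (f w.1)) ∧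
    (∀ z w u : L₁ × L₁, z ∈ SDom H₁ → w ∈ SDom H₁ → u ∈ SDom H₁ →
      u.1 ∈ H₁.imp z.1 w.1 → f u.1 ∈ H₂.imp (f z.1) (f w.1)) ∧
    (∀ z u : L₁ × L₁, z ∈ SDom H₁ → u ∈ SDom H₁ →
      (u.1 = z.2 ∧ H₁.le u.2 z.1) → (f u.1 = f z.2 ∧ H₂.le (f u.2) (f z.1))) ∧
    -- functoriality:
    (Prod.map (id : L₁ → L₁) (id : L₁ → L₁) = id) ∧
    (Prod.map (g ∘ f) (g ∘ f) = (Prod.map g g) ∘ (Prod.map f f)) := by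
  -- monotonicity of f
  have fmono : ∀ x y, H₁.le x y → H₂.le (f x) (f y) := by
    intro x y hxy
    have hx : x ∈ infm H₁.le x y := by
      constructor
      · intro b hb
        simp only [Set.mem_insert_iff, Set.mem_singleton_iff] at hb
        rcases hb with rfl | rfl
        · exact H₁.refl _
        · exact hxy
      · intro b hb
        exact hb x (by simp)
    have := hf1 x y x hx
    exact this.1 (f y) (by simp)
  refine ⟨?_, ?_, ?_, ?_, ?_, ?_, ?_⟩
  · -- snapshots to snapshots
    intro z hz
    obtain ⟨s, hs⟩ := H₁.sup_ne z.1 z.2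
    obtain ⟨t, ht⟩ := H₁.imp_ne z.1 z.1
    rw [imp_self_eq_top] at ht
    -- s is maximal in L₁
    have hsmax : s ∈ topSet H₁.le := by
      refine ⟨trivial, fun b _ => ?_⟩
      exact H₁.trans b t s (ht.2 b trivial) (hz.2 t ht s hs)
    rw [← imp_self_eq_top H₁ z.1] at hsmax
    have hfs_top : f s ∈ topSet H₂.le := by
      rw [← imp_self_eq_top H₂ (f z.1)]
      exact hf3 _ _ _ hsmax
    have hfs_sup : f s ∈ supm H₂.le (f z.1) (f z.2) := hf2 _ _ _ hs
    constructor
    · intro a ha t2 ht2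
      exact ht2.2 a trivial
    · intro t2 _ a ha
      exact H₂.trans t2 (f s) a (hfs_top.2 t2 trivial) (hfs_sup.2 a ha.1)
  · intro z w u _ _ _ h; exact hf1 _ _ _ h
  · intro z w u _ _ _ h; exact hf2 _ _ _ h
  · intro z w u _ _ _ h; exact hf3 _ _ _ h
  · intro z u _ _ h; exact ⟨congrArg f h.1, fmono _ _ h.2⟩
  · exact Prod.map_id
  · ext p <;> simp

end HyperSwap
end

section
/- Let A be an enriched hyper C_ω algebra and ∼ the relation x ∼ y iff x, y ∈ ÷z for some z. Then the quotient U(A) = A/∼ with [x] ⪯ [y] iff x ⪯ y is a well-defined proset and a Sette implicative hyperlattice, with [x] ⋏ [y] = {[z] : z ∈ x ⋏ y}, [x] ⋎ [y] = {[z] : z ∈ x ⋎ y}, and [x] ⊸ [y] = Max({[z] : x ⋏ z ⪯ y}). -/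
namespace HyperSwap

variable {L : Type*}

/-- The quotient preorder on `U(A) = A/∼`. -/
def qle (A : EHCA L) (a b : Quot (simRel A.dv)) : Prop :=
  ∃ x y, a = Quot.mk _ x ∧ b = Quot.mk _ y ∧ A.le x y

section Helpers

variable (A : EHCA L)

lemma sim_refl (x : L) : simRel A.dv x x := by
  have h := A.E0 x
  simp only [Set.mem_iUnion] at h
  obtain ⟨y, _, hx⟩ := h
  exact ⟨y, hx, hx⟩

lemma sim_symm {x y : L} (h : simRel A.dv x y) : simRel A.dv y x := by
  obtain ⟨z, h1, h2⟩ := h; exact ⟨z, h2, h1⟩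

lemma sim_equivalence : Equivalence (simRel A.dv) :=
  ⟨sim_refl A, fun h => sim_symm A h, fun h1 h2 => A.E2 _ _ _ h1 h2⟩

lemma sim_le {x y : L} (h : simRel A.dv x y) : A.le x y := by
  obtain ⟨z, hx, hy⟩ := h; exact A.E1 z x hx y hy

lemma mk_eq_iff {x y : L} :
    Quot.mk (simRel A.dv) x = Quot.mk (simRel A.dv) y ↔ simRel A.dv x y := by
  rw [Quot.eq]
  exact (sim_equivalence A).eqvGen_iff

lemma qle_mk {x y : L} : qle A (Quot.mk _ x) (Quot.mk _ y) ↔ A.le x y := by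
  constructor
  · rintro ⟨x', y', hx, hy, h⟩
    have hx' := sim_le A ((mk_eq_iff A).1 hx)
    have hy' := sim_le A (sim_symm A ((mk_eq_iff A).1 hy))
    exact A.trans _ _ _ hx' (A.trans _ _ _ h hy')
  · exact fun h => ⟨x, y, rfl, rfl, h⟩

lemma mem_infm {α : Type*} {r : α → α → Prop} {x y z : α} :
    z ∈ infm r x y ↔ (r z x ∧ r z y) ∧ ∀ w, r w x → r w y → r w z := by
  simp only [infm, maxS, Lb, Set.mem_setOf_eq, Set.mem_insert_iff, Set.mem_singleton_iff]
  constructor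
  · rintro ⟨h1, h2⟩
    exact ⟨⟨h1 x (Or.inl rfl), h1 y (Or.inr rfl)⟩,
      fun w hw1 hw2 => h2 w (by rintro b (rfl | rfl) <;> assumption)⟩
  · rintro ⟨⟨h1, h2⟩, h3⟩
    exact ⟨by rintro b (rfl | rfl) <;> assumption,
      fun w hw => h3 w (hw x (Or.inl rfl)) (hw y (Or.inr rfl))⟩

lemma mem_supm {α : Type*} {r : α → α → Prop} {x y z : α} :
    z ∈ supm r x y ↔ (r x z ∧ r y z) ∧ ∀ w, r x w → r y w → r z w := by
  simp only [supm, minS, Ub, Set.mem_setOf_eq, Set.mem_insert_iff, Set.mem_singleton_iff]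
  constructor
  · rintro ⟨h1, h2⟩
    exact ⟨⟨h1 x (Or.inl rfl), h1 y (Or.inr rfl)⟩,
      fun w hw1 hw2 => h2 w (by rintro b (rfl | rfl) <;> assumption)⟩
  · rintro ⟨⟨h1, h2⟩, h3⟩
    exact ⟨by rintro b (rfl | rfl) <;> assumption,
      fun w hw => h3 w (hw x (Or.inl rfl)) (hw y (Or.inr rfl))⟩

lemma mem_Rset {α : Type*} {r : α → α → Prop} {x y z : α} :
    z ∈ Rset r x y ↔ ∀ a ∈ infm r x z, r a y := by
  simp only [Rset, setLe, Set.mem_setOf_eq, Set.mem_singleton_iff]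
  constructor
  · intro h a ha; exact h a ha y rfl
  · rintro h a ha b rfl; exact h a ha

lemma infm_q (x y : L) :
    infm (qle A) (Quot.mk _ x) (Quot.mk _ y) = Quot.mk _ '' infm A.le x y := by
  ext a
  obtain ⟨z, rfl⟩ := Quot.exists_rep a
  have key : Quot.mk _ z ∈ infm (qle A) (Quot.mk _ x) (Quot.mk _ y) ↔ z ∈ infm A.le x y := by
    rw [mem_infm, mem_infm]
    constructor
    · rintro ⟨⟨h1, h2⟩, h3⟩
      refine ⟨⟨(qle_mk A).1 h1, (qle_mk A).1 h2⟩, fun w hw1 hw2 => ?_⟩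
      exact (qle_mk A).1 (h3 (Quot.mk _ w) ((qle_mk A).2 hw1) ((qle_mk A).2 hw2))
    · rintro ⟨⟨h1, h2⟩, h3⟩
      refine ⟨⟨(qle_mk A).2 h1, (qle_mk A).2 h2⟩, fun b hb1 hb2 => ?_⟩
      obtain ⟨w, rfl⟩ := Quot.exists_rep b
      exact (qle_mk A).2 (h3 w ((qle_mk A).1 hb1) ((qle_mk A).1 hb2))
  rw [key]
  constructor
  · exact fun h => ⟨z, h, rfl⟩
  · rintro ⟨z', hz', heq⟩
    have hs := (mk_eq_iff A).1 heq
    have h1 := sim_le A hs        -- z' ≤ z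
    have h2 := sim_le A (sim_symm A hs)  -- z ≤ z'
    rw [mem_infm] at hz' ⊢
    obtain ⟨⟨ha, hb⟩, hc⟩ := hz'
    exact ⟨⟨A.trans _ _ _ h2 ha, A.trans _ _ _ h2 hb⟩,
      fun w hw1 hw2 => A.trans _ _ _ (hc w hw1 hw2) h1⟩

lemma supm_q (x y : L) :
    supm (qle A) (Quot.mk _ x) (Quot.mk _ y) = Quot.mk _ '' supm A.le x y := by
  ext a
  obtain ⟨z, rfl⟩ := Quot.exists_rep a
  have key : Quot.mk _ z ∈ supm (qle A) (Quot.mk _ x) (Quot.mk _ y) ↔ z ∈ supm A.le x y := by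
    rw [mem_supm, mem_supm]
    constructor
    · rintro ⟨⟨h1, h2⟩, h3⟩
      refine ⟨⟨(qle_mk A).1 h1, (qle_mk A).1 h2⟩, fun w hw1 hw2 => ?_⟩
      exact (qle_mk A).1 (h3 (Quot.mk _ w) ((qle_mk A).2 hw1) ((qle_mk A).2 hw2))
    · rintro ⟨⟨h1, h2⟩, h3⟩
      refine ⟨⟨(qle_mk A).2 h1, (qle_mk A).2 h2⟩, fun b hb1 hb2 => ?_⟩
      obtain ⟨w, rfl⟩ := Quot.exists_rep b
      exact (qle_mk A).2 (h3 w ((qle_mk A).1 hb1) ((qle_mk A).1 hb2))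
  rw [key]
  constructor
  · exact fun h => ⟨z, h, rfl⟩
  · rintro ⟨z', hz', heq⟩
    have hs := (mk_eq_iff A).1 heq
    have h1 := sim_le A hs        -- z' ≤ z
    have h2 := sim_le A (sim_symm A hs)  -- z ≤ z'
    rw [mem_supm] at hz' ⊢
    obtain ⟨⟨ha, hb⟩, hc⟩ := hz'
    exact ⟨⟨A.trans _ _ _ ha h1, A.trans _ _ _ hb h1⟩,
      fun w hw1 hw2 => A.trans _ _ _ h2 (hc w hw1 hw2)⟩

lemma Rset_q (x y : L) :
    Rset (qle A) (Quot.mk _ x) (Quot.mk _ y) = Quot.mk _ '' Rset A.le x y := by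
  ext a
  obtain ⟨z, rfl⟩ := Quot.exists_rep a
  have key : Quot.mk _ z ∈ Rset (qle A) (Quot.mk _ x) (Quot.mk _ y) ↔ z ∈ Rset A.le x y := by
    rw [mem_Rset, mem_Rset, infm_q]
    constructor
    · intro h w hw
      exact (qle_mk A).1 (h (Quot.mk _ w) ⟨w, hw, rfl⟩)
    · rintro h b ⟨w, hw, rfl⟩
      exact (qle_mk A).2 (h w hw)
  rw [key]
  constructor
  · exact fun h => ⟨z, h, rfl⟩
  · rintro ⟨z', hz', heq⟩
    have hs := (mk_eq_iff A).1 heq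
    have h1 := sim_le A hs        -- z' ≤ z
    have h2 := sim_le A (sim_symm A hs)  -- z ≤ z'
    rw [mem_Rset] at hz' ⊢
    intro w hw
    rw [mem_infm] at hw
    obtain ⟨⟨ha, hb⟩, hc⟩ := hw
    apply hz'
    rw [mem_infm]
    exact ⟨⟨ha, A.trans _ _ _ hb h2⟩, fun u hu1 hu2 => hc u hu1 (A.trans _ _ _ hu2 h1)⟩

end Helpers

theorem stmt17 (A : EHCA L) :
    -- U(A) is a proset:
    (∀ a, qle A a a) ∧
    (∀ a b c, qle A a b → qle A b c → qle A a c) ∧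
    -- the order is well defined: [x] ⪯ [y] iff x ⪯ y:
    (∀ x y, qle A (Quot.mk _ x) (Quot.mk _ y) ↔ A.le x y) ∧
    -- [x] ⋏ [y] = {[z] : z ∈ x ⋏ y} and dually:
    (∀ x y, infm (qle A) (Quot.mk _ x) (Quot.mk _ y) = Quot.mk _ '' infm A.le x y) ∧
    (∀ x y, supm (qle A) (Quot.mk _ x) (Quot.mk _ y) = Quot.mk _ '' supm A.le x y) ∧
    -- U(A) is a Morgado hyperlattice:
    (∀ a b, (infm (qle A) a b).Nonempty ∧ (supm (qle A) a b).Nonempty) ∧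
    -- [x] ⊸ [y] = Max({[z] : x ⋏ z ⪯ y}), and it makes U(A) an IHL:
    (∀ x y, maxS (qle A) (Rset (qle A) (Quot.mk _ x) (Quot.mk _ y)) =
      maxS (qle A) (Quot.mk _ '' Rset A.le x y)) ∧
    (∀ a b, (maxS (qle A) (Rset (qle A) a b)).Nonempty) := by
  refine ⟨?_, ?_, fun x y => qle_mk A, infm_q A, supm_q A, ?_, ?_, ?_⟩
  · intro a
    obtain ⟨x, rfl⟩ := Quot.exists_rep a
    exact ⟨x, x, rfl, rfl, A.refl x⟩
  · rintro a b c ⟨x, y, rfl, rfl, h⟩ ⟨y', z, hy, rfl, h'⟩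
    have := sim_le A ((mk_eq_iff A).1 hy)
    exact ⟨x, z, rfl, rfl, A.trans _ _ _ h (A.trans _ _ _ this h')⟩
  · intro a b
    obtain ⟨x, rfl⟩ := Quot.exists_rep a
    obtain ⟨y, rfl⟩ := Quot.exists_rep b
    rw [infm_q, supm_q]
    exact ⟨(A.inf_ne x y).image _, (A.sup_ne x y).image _⟩
  · intro x y
    rw [Rset_q]
  · intro a b
    obtain ⟨x, rfl⟩ := Quot.exists_rep a
    obtain ⟨y, rfl⟩ := Quot.exists_rep b
    obtain ⟨m, hm⟩ := A.imp_ne x y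
    rw [A.imp_eq] at hm
    simp only [maxS, Set.mem_setOf_eq] at hm
    refine ⟨Quot.mk _ m, ?_, ?_⟩
    · rw [Rset_q]; exact ⟨m, hm.1, rfl⟩
    · intro b hb
      rw [Rset_q] at hb
      obtain ⟨z, hz, rfl⟩ := hb
      exact (qle_mk A).2 (hm.2 z hz)

end HyperSwap
end

section
/- Let L be a Sette implicative hyperlattice. The map Φ : L → U(S(L)) defined by Φ(x) = [(x, y)] for any y with x ⋎ y ≡ ⊤ (e.g., any y ∈ x ⊸ x) is well defined, injective, surjective, and is an isomorphism of Sette implicative hyperlattices. -/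
namespace HyperSwap

variable {L : Type*}

/-- The quotient preorder on `U(S(L))`. -/
def qleS (H : IHL L) (a b : Quot (simRel (swapDiv H))) : Prop :=
  ∃ x y, a = Quot.mk _ x ∧ b = Quot.mk _ y ∧ swapLe H x y

section Aux

variable (H : IHL L)

lemma mem_Lb_pair {r : L → L → Prop} {x y z : L} : z ∈ Lb r {x, y} ↔ r z x ∧ r z y := by
  constructor
  · intro h; exact ⟨h x (by simp), h y (by simp)⟩
  · rintro ⟨h1, h2⟩ b hb
    rcases hb with rfl | hb
    · exact h1
    · rcases hb with rfl; exact h2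

lemma mem_Ub_pair {r : L → L → Prop} {x y z : L} : z ∈ Ub r {x, y} ↔ r x z ∧ r y z := by
  constructor
  · intro h; exact ⟨h x (by simp), h y (by simp)⟩
  · rintro ⟨h1, h2⟩ b hb
    rcases hb with rfl | hb
    · exact h1
    · rcases hb with rfl; exact h2

/-- There is a top element (given any element of `L`). -/
lemma exists_top (x : L) : ∃ t, t ∈ topSet H.le := by
  obtain ⟨t, ht⟩ := H.imp_ne x x
  rw [H.imp_eq] at ht
  have huniv : ∀ w : L, w ∈ Rset H.le x x := by
    intro w a ha b hb
    rcases hb with rfl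
    exact ha.1 b (by simp)
  exact ⟨t, ⟨trivial, fun b _ => ht.2 b (huniv b)⟩⟩

lemma sdom_pair {t : L} (ht : t ∈ topSet H.le) (x : L) : (x, t) ∈ SDom H := by
  constructor
  · intro a _ s hs; exact hs.2 a trivial
  · intro s hs a ha
    exact H.trans s t a (ht.2 s trivial) (ha.1 t (by simp))

lemma exists_sdom (x : L) : ∃ y, (x, y) ∈ SDom H := by
  obtain ⟨t, ht⟩ := exists_top H x
  exact ⟨t, sdom_pair H ht x⟩

lemma sdom_swap_up {c p : L} (h : (c, p) ∈ SDom H) {m : L} (hpm : H.le p m) :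
    (m, c) ∈ SDom H := by
  constructor
  · intro a _ s hs; exact hs.2 a trivial
  · intro s hs a ha
    obtain ⟨b, hb⟩ := H.sup_ne c p
    have hma : H.le m a := ha.1 m (by simp)
    have hca : H.le c a := ha.1 c (by simp)
    have haUb : a ∈ Ub H.le {c, p} :=
      mem_Ub_pair.2 ⟨hca, H.trans p m a hpm hma⟩
    exact H.trans s b a (h.2 s hs b hb) (hb.2 a haUb)

lemma sim_iff_s18 (z w : SDom H) : simRel (swapDiv H) z w ↔ z.1.1 = w.1.1 := by
  constructor
  · rintro ⟨u, hz, hw⟩; exact hz.1.trans hw.1.symm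
  · intro hzw
    obtain ⟨m, hm⟩ := H.sup_ne z.1.2 w.1.2
    have hm2 := mem_Ub_pair.1 hm.1
    have hz2 : (z.1.1, z.1.2) ∈ SDom H := z.2
    refine ⟨⟨(m, z.1.1), sdom_swap_up H hz2 hm2.1⟩, ⟨rfl, hm2.1⟩, ⟨hzw.symm, hm2.2⟩⟩

/-- First coordinate descends to the quotient. -/
def fst1 : Quot (simRel (swapDiv H)) → L :=
  Quot.lift (fun z => z.1.1) (fun a b h => (sim_iff_s18 H a b).1 h)

lemma qle_iff (z w : SDom H) :
    qleS H (Quot.mk _ z) (Quot.mk _ w) ↔ H.le z.1.1 w.1.1 := by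
  constructor
  · rintro ⟨a, b, ha, hb, hle⟩
    have h1 : z.1.1 = a.1.1 := congrArg (fst1 H) ha
    have h2 : w.1.1 = b.1.1 := congrArg (fst1 H) hb
    rw [h1, h2]; exact hle
  · intro h; exact ⟨z, w, rfl, rfl, h⟩

lemma inf_mem_iff (X X' D : SDom H) :
    Quot.mk _ D ∈ infm (qleS H) (Quot.mk _ X) (Quot.mk _ X') ↔
      D.1.1 ∈ infm H.le X.1.1 X'.1.1 := by
  constructor
  · rintro ⟨h1, h2⟩
    have hp := mem_Lb_pair.1 h1
    refine ⟨mem_Lb_pair.2 ⟨(qle_iff H _ _).1 hp.1, (qle_iff H _ _).1 hp.2⟩, ?_⟩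
    intro c hc
    have hcp := mem_Lb_pair.1 hc
    obtain ⟨yc, hyc⟩ := exists_sdom H c
    have : Quot.mk _ (⟨(c, yc), hyc⟩ : SDom H) ∈ Lb (qleS H) {Quot.mk _ X, Quot.mk _ X'} :=
      mem_Lb_pair.2 ⟨(qle_iff H _ _).2 hcp.1, (qle_iff H _ _).2 hcp.2⟩
    exact (qle_iff H _ _).1 (h2 _ this)
  · rintro ⟨h1, h2⟩
    have hp := mem_Lb_pair.1 h1
    refine ⟨mem_Lb_pair.2 ⟨(qle_iff H _ _).2 hp.1, (qle_iff H _ _).2 hp.2⟩, ?_⟩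
    intro b hb
    obtain ⟨W, rfl⟩ := Quot.exists_rep b
    have hbp := mem_Lb_pair.1 hb
    exact (qle_iff H _ _).2 (h2 W.1.1
      (mem_Lb_pair.2 ⟨(qle_iff H _ _).1 hbp.1, (qle_iff H _ _).1 hbp.2⟩))

lemma sup_mem_iff (X X' D : SDom H) :
    Quot.mk _ D ∈ supm (qleS H) (Quot.mk _ X) (Quot.mk _ X') ↔
      D.1.1 ∈ supm H.le X.1.1 X'.1.1 := by
  constructor
  · rintro ⟨h1, h2⟩
    have hp := mem_Ub_pair.1 h1
    refine ⟨mem_Ub_pair.2 ⟨(qle_iff H _ _).1 hp.1, (qle_iff H _ _).1 hp.2⟩, ?_⟩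
    intro c hc
    have hcp := mem_Ub_pair.1 hc
    obtain ⟨yc, hyc⟩ := exists_sdom H c
    have : Quot.mk _ (⟨(c, yc), hyc⟩ : SDom H) ∈ Ub (qleS H) {Quot.mk _ X, Quot.mk _ X'} :=
      mem_Ub_pair.2 ⟨(qle_iff H _ _).2 hcp.1, (qle_iff H _ _).2 hcp.2⟩
    exact (qle_iff H _ _).1 (h2 _ this)
  · rintro ⟨h1, h2⟩
    have hp := mem_Ub_pair.1 h1
    refine ⟨mem_Ub_pair.2 ⟨(qle_iff H _ _).2 hp.1, (qle_iff H _ _).2 hp.2⟩, ?_⟩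
    intro b hb
    obtain ⟨W, rfl⟩ := Quot.exists_rep b
    have hbp := mem_Ub_pair.1 hb
    exact (qle_iff H _ _).2 (h2 W.1.1
      (mem_Ub_pair.2 ⟨(qle_iff H _ _).1 hbp.1, (qle_iff H _ _).1 hbp.2⟩))

lemma rset_mem_iff (X X' Z : SDom H) :
    Quot.mk _ Z ∈ Rset (qleS H) (Quot.mk _ X) (Quot.mk _ X') ↔
      Z.1.1 ∈ Rset H.le X.1.1 X'.1.1 := by
  constructor
  · intro h c hc b hb
    rcases hb with rfl
    obtain ⟨yc, hyc⟩ := exists_sdom H c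
    have hmem : Quot.mk _ (⟨(c, yc), hyc⟩ : SDom H) ∈
        infm (qleS H) (Quot.mk _ X) (Quot.mk _ Z) := (inf_mem_iff H X Z _).2 hc
    exact (qle_iff H _ _).1 (h _ hmem _ rfl)
  · intro h a ha b hb
    rcases hb with rfl
    obtain ⟨W, rfl⟩ := Quot.exists_rep a
    have := (inf_mem_iff H X Z W).1 ha
    exact (qle_iff H _ _).2 (h W.1.1 this _ rfl)

end Aux

theorem stmt18 (H : IHL L) :
    -- Φ is well defined (independent of the choice of second coordinate):
    (∀ (x y y' : L) (h : (x, y) ∈ SDom H) (h' : (x, y') ∈ SDom H),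
      Quot.mk (simRel (swapDiv H)) ⟨(x, y), h⟩ = Quot.mk (simRel (swapDiv H)) ⟨(x, y'), h'⟩) ∧
    -- Φ is injective:
    (∀ (x y x' y' : L) (h : (x, y) ∈ SDom H) (h' : (x', y') ∈ SDom H),
      Quot.mk (simRel (swapDiv H)) ⟨(x, y), h⟩ = Quot.mk (simRel (swapDiv H)) ⟨(x', y'), h'⟩ →
        x = x') ∧
    -- Φ is surjective:
    (∀ a : Quot (simRel (swapDiv H)), ∃ (x y : L) (h : (x, y) ∈ SDom H),
      a = Quot.mk (simRel (swapDiv H)) ⟨(x, y), h⟩) ∧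
    -- Φ is an isomorphism of IHLs (preserves and reflects the hyperoperations):
    (∀ (x x' d y y' e : L) (hx : (x, y) ∈ SDom H) (hx' : (x', y') ∈ SDom H)
        (hd : (d, e) ∈ SDom H),
      d ∈ infm H.le x x' ↔
        Quot.mk (simRel (swapDiv H)) ⟨(d, e), hd⟩ ∈
          infm (qleS H) (Quot.mk (simRel (swapDiv H)) ⟨(x, y), hx⟩)
            (Quot.mk (simRel (swapDiv H)) ⟨(x', y'), hx'⟩)) ∧
    (∀ (x x' d y y' e : L) (hx : (x, y) ∈ SDom H) (hx' : (x', y') ∈ SDom H)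
        (hd : (d, e) ∈ SDom H),
      d ∈ supm H.le x x' ↔
        Quot.mk (simRel (swapDiv H)) ⟨(d, e), hd⟩ ∈
          supm (qleS H) (Quot.mk (simRel (swapDiv H)) ⟨(x, y), hx⟩)
            (Quot.mk (simRel (swapDiv H)) ⟨(x', y'), hx'⟩)) ∧
    (∀ (x x' d y y' e : L) (hx : (x, y) ∈ SDom H) (hx' : (x', y') ∈ SDom H)
        (hd : (d, e) ∈ SDom H),
      d ∈ H.imp x x' ↔
        Quot.mk (simRel (swapDiv H)) ⟨(d, e), hd⟩ ∈
          maxS (qleS H) (Rset (qleS H) (Quot.mk (simRel (swapDiv H)) ⟨(x, y), hx⟩)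
            (Quot.mk (simRel (swapDiv H)) ⟨(x', y'), hx'⟩))) := by
  have wd : ∀ (x y y' : L) (h : (x, y) ∈ SDom H) (h' : (x, y') ∈ SDom H),
      Quot.mk (simRel (swapDiv H)) ⟨(x, y), h⟩ = Quot.mk (simRel (swapDiv H)) ⟨(x, y'), h'⟩ := by
    intro x y y' h h'
    exact Quot.sound ((sim_iff_s18 H _ _).2 rfl)
  refine ⟨wd, ?_, ?_, ?_, ?_, ?_⟩
  · intro x y x' y' h h' heq
    exact congrArg (fst1 H) heq
  · intro a
    obtain ⟨z, rfl⟩ := Quot.exists_rep a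
    exact ⟨z.1.1, z.1.2, z.2, rfl⟩
  · intro x x' d y y' e hx hx' hd
    exact (inf_mem_iff H ⟨(x, y), hx⟩ ⟨(x', y'), hx'⟩ ⟨(d, e), hd⟩).symm
  · intro x x' d y y' e hx hx' hd
    exact (sup_mem_iff H ⟨(x, y), hx⟩ ⟨(x', y'), hx'⟩ ⟨(d, e), hd⟩).symm
  · intro x x' d y y' e hx hx' hd
    rw [H.imp_eq]
    constructor
    · rintro ⟨h1, h2⟩
      refine ⟨(rset_mem_iff H ⟨(x, y), hx⟩ ⟨(x', y'), hx'⟩ ⟨(d, e), hd⟩).2 h1, ?_⟩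
      intro b hb
      obtain ⟨W, rfl⟩ := Quot.exists_rep b
      have := (rset_mem_iff H ⟨(x, y), hx⟩ ⟨(x', y'), hx'⟩ W).1 hb
      exact (qle_iff H _ _).2 (h2 W.1.1 this)
    · rintro ⟨h1, h2⟩
      refine ⟨(rset_mem_iff H ⟨(x, y), hx⟩ ⟨(x', y'), hx'⟩ ⟨(d, e), hd⟩).1 h1, ?_⟩
      intro c hc
      obtain ⟨yc, hyc⟩ := exists_sdom H c
      have hm : Quot.mk _ (⟨(c, yc), hyc⟩ : SDom H) ∈
          Rset (qleS H) (Quot.mk _ (⟨(x, y), hx⟩ : SDom H))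
            (Quot.mk _ (⟨(x', y'), hx'⟩ : SDom H)) :=
        (rset_mem_iff H ⟨(x, y), hx⟩ ⟨(x', y'), hx'⟩ ⟨(c, yc), hyc⟩).2 hc
      exact (qle_iff H _ _).1 (h2 _ hm)


end HyperSwap
end
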